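/- Let t > 0, c₁ > 0, c₂ > 0, α > 0, β > 0 be real numbers, and let f, g : (0, t) → ℝ be measurable functions satisfying 0 ≤ f(u) ≤ c₁ u^{−3/2} exp(−α²/(c₂ u)) and 0 ≤ g(u) ≤ c₁ u^{−3/2} exp(−β²/(c₂ u)) for all u ∈ (0, t). Then ∫₀ᵗ f(t−s) g(s) ds ≤ c₁² · √(c₂ π) · ((α+β)/(αβ)) · t^{−3/2} · exp(−(α+β)²/(c₂ t)). -/

import Mathlib

/-!
Up to constants, `u ↦ u ^ (-3/2) * exp (-a² / (c u))` is a Lévy (one-sided stable of index 1/2)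
density, and these densities form a convolution semigroup in the scale `a`; so the convolution of
the two dominating kernels is again such a kernel, at scale `α + β`. The identity is verified by
an explicit primitive: completing the square,
`-a²/(c(t-u)) - b²/(cu) = -(a+b)²/(ct) - v²/t = -(a-b)²/(ct) - w²/t` with
`v, w = (b(t-u) ∓ au)/√(cu(t-u))`, and a suitable combination of `∫₀^v e^{-s²/t}` and
`∫₀^w e^{-s²/t}` differentiates to the kernel product. Since `v → ∞` at `0⁺`, while at `t⁻`
`v → -∞` and `w → ∞`, the integral over `(0, t)` is read off from Gaussian integrals.
-/

open MeasureTheory Real Set Filter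
open scoped Topology

section ImproperFTC

variable {g g' : ℝ → ℝ} {a b ga gb : ℝ}

theorem integrableOn_Ioo_deriv_of_nonneg_of_tendsto (hab : a < b)
    (hderiv : ∀ x ∈ Ioo a b, HasDerivAt g (g' x) x) (hpos : ∀ x ∈ Ioo a b, 0 ≤ g' x)
    (ha : Tendsto g (𝓝[>] a) (𝓝 ga)) (hb : Tendsto g (𝓝[<] b) (𝓝 gb)) :
    IntegrableOn g' (Ioo a b) := by
  set G : ℝ → ℝ := Function.update (Function.update g a ga) b gb
  have hG : ∀ x ∈ Ioo a b, HasDerivAt G (g' x) x := fun x hx ↦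
    (hderiv x hx).congr_of_eventuallyEq <| by
      filter_upwards [Ioo_mem_nhds hx.1 hx.2] with y hy
      simp only [G]
      rw [Function.update_of_ne hy.2.ne, Function.update_of_ne hy.1.ne']
  have hcont : ContinuousOn G (Icc a b) := by
    rw [continuousOn_update_iff, continuousOn_update_iff, Icc_sdiff_right, Ico_sdiff_left]
    refine ⟨⟨fun x hx ↦ (hderiv x hx).continuousAt.continuousWithinAt,
      fun _ ↦ ha.mono_left (nhdsWithin_mono _ Ioo_subset_Ioi_self)⟩, fun _ ↦ ?_⟩
    refine (hb.congr' ?_).mono_left (nhdsWithin_mono _ Ico_subset_Iio_self)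
    filter_upwards [Ioo_mem_nhdsLT hab] with x hx using (Function.update_of_ne hx.1.ne' _ _).symm
  exact (intervalIntegral.integrableOn_deriv_of_nonneg hcont hG hpos).mono_set Ioo_subset_Ioc_self

theorem integral_Ioo_deriv_of_nonneg_of_tendsto (hab : a < b)
    (hderiv : ∀ x ∈ Ioo a b, HasDerivAt g (g' x) x) (hpos : ∀ x ∈ Ioo a b, 0 ≤ g' x)
    (ha : Tendsto g (𝓝[>] a) (𝓝 ga)) (hb : Tendsto g (𝓝[<] b) (𝓝 gb)) :
    ∫ x in Ioo a b, g' x = gb - ga := by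
  have hint := integrableOn_Ioo_deriv_of_nonneg_of_tendsto hab hderiv hpos ha hb
  rw [← integral_Ioc_eq_integral_Ioo, ← intervalIntegral.integral_of_le hab.le]
  refine intervalIntegral.integral_eq_sub_of_hasDerivAt_of_tendsto hab hderiv ?_ ha hb
  rwa [intervalIntegrable_iff_integrableOn_Ioo_of_le hab.le]

end ImproperFTC

theorem rpow_neg_three_halves {x : ℝ} (hx : 0 ≤ x) : x ^ (-(3:ℝ)/2) = (√x ^ 3)⁻¹ := by
  rw [sqrt_eq_rpow, ← rpow_natCast, ← rpow_mul hx, ← rpow_neg hx]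
  norm_num

theorem tendsto_inv_sqrt_atTop {l : Filter ℝ} {q : ℝ → ℝ} (h0 : Tendsto q l (𝓝 0))
    (hpos : ∀ᶠ x in l, 0 < q x) : Tendsto (fun x ↦ (√(q x))⁻¹) l atTop := by
  refine Tendsto.inv_tendsto_nhdsGT_zero (tendsto_nhdsWithin_iff.2 ⟨?_, ?_⟩)
  · simpa [Function.comp_def] using (continuous_sqrt.tendsto 0).comp h0
  · exact hpos.mono fun x hx ↦ sqrt_pos.2 hx

noncomputable def gaussPrimitive (t x : ℝ) : ℝ := ∫ s in (0:ℝ)..x, exp (-s ^ 2 / t)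

namespace gaussPrimitive

variable {t : ℝ}

theorem hasDerivAt (t x : ℝ) : HasDerivAt (gaussPrimitive t) (exp (-x ^ 2 / t)) x := by
  have hcont : Continuous fun s : ℝ ↦ exp (-s ^ 2 / t) := by fun_prop
  exact intervalIntegral.integral_hasDerivAt_right (hcont.intervalIntegrable _ _)
    (hcont.stronglyMeasurableAtFilter _ _) hcont.continuousAt

theorem neg (t x : ℝ) : gaussPrimitive t (-x) = -gaussPrimitive t x := by
  rw [gaussPrimitive, gaussPrimitive, ← intervalIntegral.integral_symm]
  have h := (intervalIntegral.integral_comp_neg (a := x) (b := 0) fun s ↦ exp (-s ^ 2 / t)).symm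
  simp only [neg_zero] at h
  simpa only [neg_sq] using h

theorem tendsto_atTop (ht : 0 < t) :
    Tendsto (gaussPrimitive t) atTop (𝓝 (√(π * t) / 2)) := by
  have hexp : (fun s : ℝ ↦ exp (-s ^ 2 / t)) = fun s ↦ exp (-t⁻¹ * s ^ 2) := by
    ext s; ring_nf
  have hint : IntegrableOn (fun s : ℝ ↦ exp (-s ^ 2 / t)) (Ioi 0) := by
    rw [hexp]; exact (integrable_exp_neg_mul_sq (inv_pos.2 ht)).integrableOn
  have hval : ∫ s in Ioi (0:ℝ), exp (-s ^ 2 / t) = √(π * t) / 2 := by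
    rw [hexp, integral_gaussian_Ioi, div_inv_eq_mul]
  rw [← hval]
  exact intervalIntegral_tendsto_integral_Ioi 0 hint tendsto_id

theorem tendsto_atBot (ht : 0 < t) :
    Tendsto (gaussPrimitive t) atBot (𝓝 (-(√(π * t) / 2))) := by
  have h := ((tendsto_atTop ht).comp tendsto_neg_atBot_atTop).neg
  refine h.congr fun x ↦ ?_
  simp [gaussPrimitive.neg]

end gaussPrimitive

noncomputable def levyKernel (c a u : ℝ) : ℝ := u ^ (-(3:ℝ)/2) * exp (-a ^ 2 / (c * u))

noncomputable def convArg (t c a b u : ℝ) : ℝ := (b * (t - u) - a * u) / √(c * u * (t - u))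

section LevyConvolution

variable {t c a b u : ℝ}

theorem levyKernel_nonneg (hu : 0 ≤ u) : 0 ≤ levyKernel c a u := by
  unfold levyKernel; positivity

theorem hasDerivAt_convArg (hc : 0 < c) (hu : 0 < u) (hut : u < t) :
    HasDerivAt (convArg t c a b)
      (-(c * t * (a * u + b * (t - u))) / (2 * √(c * u * (t - u)) ^ 3)) u := by
  have hq : 0 < c * u * (t - u) := by have := sub_pos.2 hut; positivity
  have hq' : HasDerivAt (fun x ↦ c * x * (t - x)) (c * (t - 2 * u)) u :=
    (((hasDerivAt_id' u).const_mul c).mul ((hasDerivAt_id' u).const_sub t)).congr_deriv (by ring)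
  have hN : HasDerivAt (fun x ↦ b * (t - x) - a * x) (-(a + b)) u :=
    ((((hasDerivAt_id' u).const_sub t).const_mul b).sub
      ((hasDerivAt_id' u).const_mul a)).congr_deriv (by ring)
  refine (hN.div (hq'.sqrt hq.ne') (sqrt_pos.2 hq).ne').congr_deriv ?_
  have hsq := sq_sqrt hq.le
  have hD := sqrt_pos.2 hq
  field_simp
  linear_combination (-2 * a - 2 * b) * hsq

theorem convArg_sq (hc : 0 < c) (hu : 0 < u) (hut : u < t) :
    convArg t c a b u ^ 2 = (b * (t - u) - a * u) ^ 2 / (c * u * (t - u)) := by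
  have hq : 0 < c * u * (t - u) := by have := sub_pos.2 hut; positivity
  rw [convArg, div_pow, sq_sqrt hq.le]

theorem neg_sq_div_add_neg_sq_div (hc : 0 < c) (hu : 0 < u) (hut : u < t) :
    -a ^ 2 / (c * (t - u)) + -b ^ 2 / (c * u)
      = -(a + b) ^ 2 / (c * t) + -convArg t c a b u ^ 2 / t := by
  have htu := sub_pos.2 hut
  have ht := hu.trans hut
  rw [convArg_sq hc hu hut]
  field_simp
  ring

theorem exp_mul_exp_neg_convArg_neg_sq (hc : 0 < c) (hu : 0 < u) (hut : u < t) :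
    exp (4 * a * b / (c * t)) * exp (-convArg t c (-a) b u ^ 2 / t)
      = exp (-convArg t c a b u ^ 2 / t) := by
  have htu := sub_pos.2 hut
  have ht := hu.trans hut
  rw [← exp_add, convArg_sq hc hu hut, convArg_sq hc hu hut]
  congr 1
  field_simp
  ring

theorem levyKernel_mul_levyKernel (hc : 0 < c) (hu : 0 < u) (hut : u < t) :
    levyKernel c a (t - u) * levyKernel c b u
      = √c ^ 3 * exp (-(a + b) ^ 2 / (c * t)) * exp (-convArg t c a b u ^ 2 / t)
          / √(c * u * (t - u)) ^ 3 := by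
  have htu := sub_pos.2 hut
  have hexp : exp (-a ^ 2 / (c * (t - u))) * exp (-b ^ 2 / (c * u))
      = exp (-(a + b) ^ 2 / (c * t)) * exp (-convArg t c a b u ^ 2 / t) := by
    rw [← exp_add, ← exp_add, neg_sq_div_add_neg_sq_div hc hu hut]
  rw [levyKernel, levyKernel, rpow_neg_three_halves htu.le, rpow_neg_three_halves hu.le,
    sqrt_mul (by positivity) (t - u), sqrt_mul hc.le u]
  have hsc := sqrt_pos.2 hc
  calc _ = (√(t - u) ^ 3)⁻¹ * (√u ^ 3)⁻¹
          * (exp (-a ^ 2 / (c * (t - u))) * exp (-b ^ 2 / (c * u))) := by ring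
    _ = _ := by
        rw [hexp]
        field_simp

-- With `v = convArg t c a b`, `w = convArg t c (-a) b` and `exp (4ab/(ct)) * exp (-w²/t) =
-- exp (-v²/t)`, the weights are the ones for which `(a + b) v' + (a - b) w'` depends on `u` only
-- through the factor `1 / √(cu(t-u))³`.
noncomputable def levyConvPrimitive (t c a b u : ℝ) : ℝ :=
  (a + b) * gaussPrimitive t (convArg t c a b u)
    + (a - b) * exp (4 * a * b / (c * t)) * gaussPrimitive t (convArg t c (-a) b u)

theorem hasDerivAt_levyConvPrimitive (hc : 0 < c) (hu : 0 < u) (hut : u < t) :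
    HasDerivAt (levyConvPrimitive t c a b)
      (-(c * a * b * t ^ 2) * exp (-convArg t c a b u ^ 2 / t) / √(c * u * (t - u)) ^ 3) u := by
  have hv := (gaussPrimitive.hasDerivAt t _).comp u (hasDerivAt_convArg (a := a) (b := b) hc hu hut)
  have hw :=
    (gaussPrimitive.hasDerivAt t _).comp u (hasDerivAt_convArg (a := -a) (b := b) hc hu hut)
  refine ((hv.const_mul (a + b)).add
    (hw.const_mul ((a - b) * exp (4 * a * b / (c * t))))).congr_deriv ?_
  linear_combination
    (a - b) * (-(c * t * (-a * u + b * (t - u))) / (2 * √(c * u * (t - u)) ^ 3))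
      * exp_mul_exp_neg_convArg_neg_sq (a := a) (b := b) hc hu hut

theorem hasDerivAt_const_mul_levyConvPrimitive (hc : 0 < c) (ha : 0 < a) (hb : 0 < b)
    (hu : 0 < u) (hut : u < t) :
    HasDerivAt
      (fun x ↦ -(√c * exp (-(a + b) ^ 2 / (c * t)) / (a * b * t ^ 2)) * levyConvPrimitive t c a b x)
      (levyKernel c a (t - u) * levyKernel c b u) u := by
  refine ((hasDerivAt_levyConvPrimitive hc hu hut).const_mul _).congr_deriv ?_
  rw [levyKernel_mul_levyKernel hc hu hut]
  have ht := hu.trans hut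
  have hsc := sqrt_pos.2 hc
  have hsc3 : √c ^ 3 = c * √c := by rw [pow_succ, sq_sqrt hc.le]
  rw [hsc3]
  field_simp

theorem tendsto_inv_sqrt_convArg_denom_nhdsGT_zero (hc : 0 < c) (ht : 0 < t) :
    Tendsto (fun u ↦ (√(c * u * (t - u)))⁻¹) (𝓝[>] 0) atTop := by
  refine tendsto_inv_sqrt_atTop ?_ ?_
  · exact ((by fun_prop : Continuous fun u ↦ c * u * (t - u)).tendsto' 0 _ (by ring)).mono_left
      nhdsWithin_le_nhds
  · filter_upwards [Ioo_mem_nhdsGT ht] with u hu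
    exact mul_pos (mul_pos hc hu.1) (sub_pos.2 hu.2)

theorem tendsto_inv_sqrt_convArg_denom_nhdsLT (hc : 0 < c) (ht : 0 < t) :
    Tendsto (fun u ↦ (√(c * u * (t - u)))⁻¹) (𝓝[<] t) atTop := by
  refine tendsto_inv_sqrt_atTop ?_ ?_
  · exact ((by fun_prop : Continuous fun u ↦ c * u * (t - u)).tendsto' t _ (by ring)).mono_left
      nhdsWithin_le_nhds
  · filter_upwards [Ioo_mem_nhdsLT ht] with u hu
    exact mul_pos (mul_pos hc hu.1) (sub_pos.2 hu.2)

theorem tendsto_convArg_nhdsGT_zero (hc : 0 < c) (ht : 0 < t) (hb : 0 < b) :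
    Tendsto (convArg t c a b) (𝓝[>] 0) atTop := by
  have hN : Tendsto (fun u ↦ b * (t - u) - a * u) (𝓝[>] 0) (𝓝 (b * t)) :=
    ((by fun_prop : Continuous fun u ↦ b * (t - u) - a * u).tendsto' 0 _ (by ring)).mono_left
      nhdsWithin_le_nhds
  exact (hN.pos_mul_atTop (by positivity) (tendsto_inv_sqrt_convArg_denom_nhdsGT_zero hc ht)).congr
    fun u ↦ (div_eq_mul_inv _ _).symm

theorem tendsto_convArg_nhdsLT_of_pos (hc : 0 < c) (ht : 0 < t) (ha : 0 < a) :
    Tendsto (convArg t c a b) (𝓝[<] t) atBot := by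
  have hN : Tendsto (fun u ↦ b * (t - u) - a * u) (𝓝[<] t) (𝓝 (-(a * t))) :=
    ((by fun_prop : Continuous fun u ↦ b * (t - u) - a * u).tendsto' t _ (by ring)).mono_left
      nhdsWithin_le_nhds
  exact (hN.neg_mul_atTop (neg_neg_of_pos (mul_pos ha ht))
    (tendsto_inv_sqrt_convArg_denom_nhdsLT hc ht)).congr fun u ↦ (div_eq_mul_inv _ _).symm

theorem tendsto_convArg_nhdsLT_of_neg (hc : 0 < c) (ht : 0 < t) (ha : a < 0) :
    Tendsto (convArg t c a b) (𝓝[<] t) atTop := by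
  have hN : Tendsto (fun u ↦ b * (t - u) - a * u) (𝓝[<] t) (𝓝 (-(a * t))) :=
    ((by fun_prop : Continuous fun u ↦ b * (t - u) - a * u).tendsto' t _ (by ring)).mono_left
      nhdsWithin_le_nhds
  exact (hN.pos_mul_atTop (neg_pos.2 (mul_neg_of_neg_of_pos ha ht))
    (tendsto_inv_sqrt_convArg_denom_nhdsLT hc ht)).congr fun u ↦ (div_eq_mul_inv _ _).symm

theorem tendsto_levyConvPrimitive_nhdsGT_zero (hc : 0 < c) (ht : 0 < t) (hb : 0 < b) :
    Tendsto (levyConvPrimitive t c a b) (𝓝[>] 0)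
      (𝓝 ((a + b) * (√(π * t) / 2) + (a - b) * exp (4 * a * b / (c * t)) * (√(π * t) / 2))) :=
  (((gaussPrimitive.tendsto_atTop ht).comp
      (tendsto_convArg_nhdsGT_zero hc ht hb)).const_mul _).add
    (((gaussPrimitive.tendsto_atTop ht).comp
      (tendsto_convArg_nhdsGT_zero hc ht hb)).const_mul _)

theorem tendsto_levyConvPrimitive_nhdsLT (hc : 0 < c) (ht : 0 < t) (ha : 0 < a) :
    Tendsto (levyConvPrimitive t c a b) (𝓝[<] t)
      (𝓝 ((a + b) * -(√(π * t) / 2) + (a - b) * exp (4 * a * b / (c * t)) * (√(π * t) / 2))) :=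
  (((gaussPrimitive.tendsto_atBot ht).comp
      (tendsto_convArg_nhdsLT_of_pos hc ht ha)).const_mul _).add
    (((gaussPrimitive.tendsto_atTop ht).comp
      (tendsto_convArg_nhdsLT_of_neg hc ht (neg_lt_zero.2 ha))).const_mul _)

theorem integrableOn_and_integral_levyKernel_conv (hc : 0 < c) (ht : 0 < t) (ha : 0 < a)
    (hb : 0 < b) :
    IntegrableOn (fun s ↦ levyKernel c a (t - s) * levyKernel c b s) (Ioo 0 t) ∧
    ∫ s in Ioo 0 t, levyKernel c a (t - s) * levyKernel c b s
      = √(c * π) * ((a + b) / (a * b)) * t ^ (-(3:ℝ)/2) * exp (-(a + b) ^ 2 / (c * t)) := by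
  have hderiv : ∀ u ∈ Ioo 0 t, HasDerivAt _ (levyKernel c a (t - u) * levyKernel c b u) u :=
    fun u hu ↦ hasDerivAt_const_mul_levyConvPrimitive hc ha hb hu.1 hu.2
  have hpos : ∀ u ∈ Ioo 0 t, 0 ≤ levyKernel c a (t - u) * levyKernel c b u := fun u hu ↦
    mul_nonneg (levyKernel_nonneg (sub_pos.2 hu.2).le) (levyKernel_nonneg hu.1.le)
  have h0 := (tendsto_levyConvPrimitive_nhdsGT_zero (a := a) hc ht hb).const_mul
    (-(√c * exp (-(a + b) ^ 2 / (c * t)) / (a * b * t ^ 2)))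
  have h1 := (tendsto_levyConvPrimitive_nhdsLT (b := b) hc ht ha).const_mul
    (-(√c * exp (-(a + b) ^ 2 / (c * t)) / (a * b * t ^ 2)))
  refine ⟨integrableOn_Ioo_deriv_of_nonneg_of_tendsto ht hderiv hpos h0 h1, ?_⟩
  rw [integral_Ioo_deriv_of_nonneg_of_tendsto ht hderiv hpos h0 h1, rpow_neg_three_halves ht.le,
    sqrt_mul hc.le, sqrt_mul pi_pos.le]
  have hst := sqrt_pos.2 ht
  have hsq := sq_sqrt ht.le
  field_simp
  linear_combination 2 * (a + b) * (√t ^ 2 + t) * hsq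

end LevyConvolution

theorem convolution_gaussian_bound_general (t c₁ c₂ α β : ℝ)
    (ht : 0 < t) (hc₂ : 0 < c₂) (hα : 0 < α) (hβ : 0 < β)
    (f g : ℝ → ℝ)
    (hf : ∀ u ∈ Set.Ioo (0:ℝ) t,
      0 ≤ f u ∧ f u ≤ c₁ * u ^ (-(3:ℝ)/2) * Real.exp (-α ^ 2 / (c₂ * u)))
    (hg : ∀ u ∈ Set.Ioo (0:ℝ) t,
      0 ≤ g u ∧ g u ≤ c₁ * u ^ (-(3:ℝ)/2) * Real.exp (-β ^ 2 / (c₂ * u))) :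
    ∫ s in Set.Ioo (0:ℝ) t, f (t - s) * g s
      ≤ c₁ ^ 2 * Real.sqrt (c₂ * π) * ((α + β) / (α * β)) * t ^ (-(3:ℝ)/2) *
          Real.exp (-(α + β) ^ 2 / (c₂ * t)) := by
  obtain ⟨hint, hval⟩ := integrableOn_and_integral_levyKernel_conv hc₂ ht hα hβ
  have hmem : ∀ s ∈ Ioo 0 t, t - s ∈ Ioo 0 t := fun s hs ↦ ⟨sub_pos.2 hs.2, sub_lt_self t hs.1⟩
  have hle : ∀ s ∈ Ioo 0 t,
      f (t - s) * g s ≤ c₁ ^ 2 * (levyKernel c₂ α (t - s) * levyKernel c₂ β s) := by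
    intro s hs
    obtain ⟨hf0, hf1⟩ := hf _ (hmem s hs)
    obtain ⟨hg0, hg1⟩ := hg s hs
    rw [mul_assoc] at hf1 hg1
    calc f (t - s) * g s ≤ c₁ * levyKernel c₂ α (t - s) * (c₁ * levyKernel c₂ β s) :=
          mul_le_mul hf1 hg1 hg0 (hf0.trans hf1)
      _ = _ := by ring
  calc ∫ s in Ioo 0 t, f (t - s) * g s
      ≤ ∫ s in Ioo 0 t, c₁ ^ 2 * (levyKernel c₂ α (t - s) * levyKernel c₂ β s) :=
        setIntegral_mono_of_nonneg (fun s hs ↦ mul_nonneg (hf _ (hmem s hs)).1 (hg s hs).1) hle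
          (hint.const_mul _)
    _ = _ := by rw [integral_const_mul, hval]; ring

/-- A time convolution of two functions, each dominated by a one-sided Gaussian kernel,
is dominated by the exact convolution of the two Gaussian kernels. -/
theorem convolution_gaussian_bound (t c₁ c₂ α β : ℝ)
    (ht : 0 < t) (hc₁ : 0 < c₁) (hc₂ : 0 < c₂) (hα : 0 < α) (hβ : 0 < β)
    (f g : ℝ → ℝ)
    (hfm : AEMeasurable f (volume.restrict (Set.Ioo 0 t)))
    (hgm : AEMeasurable g (volume.restrict (Set.Ioo 0 t)))
    (hf : ∀ u ∈ Set.Ioo (0:ℝ) t,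
      0 ≤ f u ∧ f u ≤ c₁ * u ^ (-(3:ℝ)/2) * Real.exp (-α ^ 2 / (c₂ * u)))
    (hg : ∀ u ∈ Set.Ioo (0:ℝ) t,
      0 ≤ g u ∧ g u ≤ c₁ * u ^ (-(3:ℝ)/2) * Real.exp (-β ^ 2 / (c₂ * u))) :
    ∫ s in Set.Ioo (0:ℝ) t, f (t - s) * g s
      ≤ c₁ ^ 2 * Real.sqrt (c₂ * π) * ((α + β) / (α * β)) * t ^ (-(3:ℝ)/2) *
          Real.exp (-(α + β) ^ 2 / (c₂ * t)) :=
  convolution_gaussian_bound_general t c₁ c₂ α β ht hc₂ hα hβ f g hf hg
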